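/- Let X be a Banach space, μ a regular Borel probability measure on (B_{X*}, w*), S : X → L¹(μ) the operator S(x)(x*) = x*(x), and R : L¹(μ) → X* the operator determined by ⟨R(f), x⟩ = ∫_{B_{X*}} f·S(x) dμ. If the operator S' : X → L²(μ), S'(x)(x*) = x*(x), has non-separable range, then T := R ∘ S : X → X* has non-separable range. -/

import Mathlib

open MeasureTheory NormedSpace TopologicalSpace

variable (X : Type*) [NormedAddCommGroup X] [NormedSpace ℝ X]

/-- The closed unit ball of the dual of `X`, equipped with the weak* topology
(a compact space, by the Banach–Alaoglu theorem). -/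
def dualBall : Set (WeakDual ℝ X) :=
  WeakDual.toStrongDual ⁻¹' Metric.closedBall (0 : StrongDual ℝ X) 1

instance : CompactSpace (dualBall X) :=
  isCompact_iff_compactSpace.mp (WeakDual.isCompact_closedBall (𝕜 := ℝ) (E := X) 0 1)

noncomputable instance : MeasurableSpace (dualBall X) := borel _

instance : BorelSpace (dualBall X) := ⟨rfl⟩

/-- The canonical embedding `i : X → C(B_{X*})`, `i(x)(x*) = x*(x)`. -/
noncomputable def canonicalEmbeddingCK (x : X) : C(dualBall X, ℝ) :=
  ContinuousMap.mk (fun φ : dualBall X => (φ : WeakDual ℝ X) x)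
    ((WeakDual.eval_continuous x).comp continuous_subtype_val)

/-!
The identity `‖S'(x - y)‖² = ⟨T(x - y), x - y⟩` gives `‖S'x - S'y‖² ≤ ‖Tx - Ty‖ ‖x - y‖`.
On each bounded set this makes `S'` a uniformly continuous function of `T`, so separability
passes from the range of `T` to the range of `S'` ball by ball.
-/

section Separability

variable {α β γ : Type*} [PseudoMetricSpace β] [PseudoMetricSpace γ]

theorem TopologicalSpace.IsSeparable.image_of_uniformly_controlled {s : Set α} {f : α → β}
    {g : α → γ} (hf : IsSeparable (f '' s))
    (hfg : ∀ ε > 0, ∃ δ > 0, ∀ x ∈ s, ∀ y ∈ s, dist (f x) (f y) < δ → dist (g x) (g y) < ε) :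
    IsSeparable (g '' s) := by
  obtain ⟨t, hts, htc, hdense⟩ := hf.exists_countable_dense_subset
  choose pre hpre_mem hpre_eq using fun b (hb : b ∈ t) => hts hb
  have : Countable t := htc.to_subtype
  refine ⟨Set.range fun b : t => g (pre b b.2), Set.countable_range _, ?_⟩
  rintro _ ⟨x, hx, rfl⟩
  refine Metric.mem_closure_iff.2 fun ε hε => ?_
  obtain ⟨δ, hδ, hcontrol⟩ := hfg ε hε
  obtain ⟨b, hb, hdist⟩ := Metric.mem_closure_iff.1 (hdense ⟨x, hx, rfl⟩) δ hδ
  refine ⟨_, ⟨⟨b, hb⟩, rfl⟩, hcontrol x hx _ (hpre_mem b hb) ?_⟩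
  rwa [hpre_eq b hb]

theorem isSeparable_range_of_dist_sq_le [PseudoMetricSpace α] {f : α → β} {g : α → γ}
    (hf : IsSeparable (Set.range f))
    (hfg : ∀ x y, dist (g x) (g y) ^ 2 ≤ dist (f x) (f y) * dist x y) :
    IsSeparable (Set.range g) := by
  rcases isEmpty_or_nonempty α with _ | ⟨⟨x₀⟩⟩
  · rw [Set.range_eq_empty]
    exact Set.countable_empty.isSeparable
  rw [← Set.image_univ, ← Metric.iUnion_closedBall_nat x₀, Set.image_iUnion]
  refine IsSeparable.iUnion fun k => ?_
  refine (hf.mono (Set.image_subset_range _ _)).image_of_uniformly_controlled fun ε hε => ?_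
  refine ⟨ε ^ 2 / (2 * k + 1), by positivity, fun x hx y hy hxy => ?_⟩
  have hdiam : dist x y ≤ 2 * k := by
    have := dist_triangle_right x y x₀
    linarith [Metric.mem_closedBall.1 hx, Metric.mem_closedBall.1 hy]
  refine lt_of_pow_lt_pow_left₀ 2 hε.le ?_
  calc dist (g x) (g y) ^ 2 ≤ dist (f x) (f y) * (2 * k) :=
        (hfg x y).trans (mul_le_mul_of_nonneg_left hdiam dist_nonneg)
    _ < ε ^ 2 / (2 * k + 1) * (2 * k + 1) :=
        mul_lt_mul'' hxy (by linarith) dist_nonneg (by positivity)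
    _ = ε ^ 2 := by field_simp

end Separability

theorem canonicalEmbeddingCK_sub (x y : X) :
    canonicalEmbeddingCK X (x - y) = canonicalEmbeddingCK X x - canonicalEmbeddingCK X y := by
  ext a
  simp [canonicalEmbeddingCK]

variable {X}

theorem norm_toLp_canonicalEmbeddingCK_sq (μ : Measure (dualBall X)) [IsFiniteMeasure μ]
    (R : Lp ℝ 1 μ →L[ℝ] StrongDual ℝ X)
    (hR : ∀ (f : Lp ℝ 1 μ) (x : X),
      R f x = ∫ a : dualBall X, f a * ((a : WeakDual ℝ X) x) ∂μ) (x : X) :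
    ‖ContinuousMap.toLp 2 μ ℝ (canonicalEmbeddingCK X x)‖ ^ 2 =
      R (ContinuousMap.toLp 1 μ ℝ (canonicalEmbeddingCK X x)) x := by
  rw [← real_inner_self_eq_norm_sq, ContinuousMap.inner_toLp, hR]
  refine integral_congr_ae ?_
  filter_upwards [ContinuousMap.coeFn_toLp (p := 1) (𝕜 := ℝ) μ (canonicalEmbeddingCK X x)]
    with a ha
  rw [ha]
  simp [canonicalEmbeddingCK]

theorem dist_toLp_canonicalEmbeddingCK_sq_le (μ : Measure (dualBall X)) [IsFiniteMeasure μ]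
    (R : Lp ℝ 1 μ →L[ℝ] StrongDual ℝ X)
    (hR : ∀ (f : Lp ℝ 1 μ) (x : X),
      R f x = ∫ a : dualBall X, f a * ((a : WeakDual ℝ X) x) ∂μ) (x y : X) :
    dist (ContinuousMap.toLp 2 μ ℝ (canonicalEmbeddingCK X x))
        (ContinuousMap.toLp 2 μ ℝ (canonicalEmbeddingCK X y)) ^ 2 ≤
      dist (R (ContinuousMap.toLp 1 μ ℝ (canonicalEmbeddingCK X x)))
        (R (ContinuousMap.toLp 1 μ ℝ (canonicalEmbeddingCK X y))) * dist x y := by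
  simp only [dist_eq_norm, ← map_sub, ← canonicalEmbeddingCK_sub]
  set T := R (ContinuousMap.toLp 1 μ ℝ (canonicalEmbeddingCK X (x - y)))
  calc ‖ContinuousMap.toLp 2 μ ℝ (canonicalEmbeddingCK X (x - y))‖ ^ 2 = T (x - y) :=
        norm_toLp_canonicalEmbeddingCK_sq μ R hR (x - y)
    _ ≤ ‖T (x - y)‖ := le_abs_self _
    _ ≤ ‖T‖ * ‖x - y‖ := T.le_opNorm _

theorem nonseparable_range_of_nonseparable_L2_range_general
    (μ : Measure (dualBall X)) [IsProbabilityMeasure μ]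
    (R : Lp ℝ 1 μ →L[ℝ] StrongDual ℝ X)
    (hR : ∀ (f : Lp ℝ 1 μ) (x : X),
      R f x = ∫ a : dualBall X, f a * ((a : WeakDual ℝ X) x) ∂μ)
    (hS' : ¬ IsSeparable
      (Set.range fun x : X => ContinuousMap.toLp 2 μ ℝ (canonicalEmbeddingCK X x))) :
    ¬ IsSeparable
      (Set.range fun x : X =>
        R (ContinuousMap.toLp 1 μ ℝ (canonicalEmbeddingCK X x))) := fun hT =>
  hS' (isSeparable_range_of_dist_sq_le hT (dist_toLp_canonicalEmbeddingCK_sq_le μ R hR))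

/-- Let `X` be a Banach space, `μ` a regular Borel probability measure
on `(B_{X*}, w*)`, `S : X → L¹(μ)` the operator `S(x)(x*) = x*(x)` and `R : L¹(μ) → X*`
the operator determined by `⟨R(f), x⟩ = ∫ f·S(x) dμ`. If the corresponding operator
`S' : X → L²(μ)` has non-separable range, then `T := R ∘ S : X → X*` has non-separable
range. -/
theorem nonseparable_range_of_nonseparable_L2_range [CompleteSpace X]
    (μ : Measure (dualBall X)) [IsProbabilityMeasure μ] [μ.Regular]
    (R : Lp ℝ 1 μ →L[ℝ] StrongDual ℝ X)
    (hR : ∀ (f : Lp ℝ 1 μ) (x : X),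
      R f x = ∫ a : dualBall X, f a * ((a : WeakDual ℝ X) x) ∂μ)
    (hS' : ¬ IsSeparable
      (Set.range fun x : X => ContinuousMap.toLp 2 μ ℝ (canonicalEmbeddingCK X x))) :
    ¬ IsSeparable
      (Set.range fun x : X =>
        R (ContinuousMap.toLp 1 μ ℝ (canonicalEmbeddingCK X x))) :=
  nonseparable_range_of_nonseparable_L2_range_general μ R hR hS'
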